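/- arXiv:2306.04539 — 4 statements merged into one kernel-verified Lean document; each statement's English description precedes it below -/
import Mathlib

section
/- Let p be a joint distribution on finite X1 × X2 × Y with R, U1, U2, S defined via a common optimizer q* ∈ Δ_p as R = I_{q*}(X1;X2;Y), U1 = I_{q*}(X1;Y|X2), U2 = I_{q*}(X2;Y|X1), S = I_p({X1,X2};Y) - I_{q*}({X1,X2};Y). Then R - S = I_p(X1;X2;Y), i.e., synergy minus redundancy equals the negative interaction information of p. -/
open Finset

noncomputable section

namespace PaperPID

variable {Ω₁ Ω₂ Ω₃ : Type*} [Fintype Ω₁] [Fintype Ω₂] [Fintype Ω₃]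

/-- Shannon entropy in bits of a finitely supported distribution given as a function. -/
def ent {α : Type*} [Fintype α] (p : α → ℝ) : ℝ := -∑ a, p a * Real.logb 2 (p a)

/-- `p` is a probability distribution. -/
def IsProb {α : Type*} [Fintype α] (p : α → ℝ) : Prop := (∀ a, 0 ≤ p a) ∧ ∑ a, p a = 1

/-- marginal on the first coordinate -/
def m1 (p : Ω₁ × Ω₂ × Ω₃ → ℝ) : Ω₁ → ℝ := fun a => ∑ b, ∑ c, p (a, b, c)

/-- marginal on the second coordinate -/
def m2 (p : Ω₁ × Ω₂ × Ω₃ → ℝ) : Ω₂ → ℝ := fun b => ∑ a, ∑ c, p (a, b, c)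

/-- marginal on the third coordinate -/
def m3 (p : Ω₁ × Ω₂ × Ω₃ → ℝ) : Ω₃ → ℝ := fun c => ∑ a, ∑ b, p (a, b, c)

/-- marginal on coordinates (1,2) -/
def m12 (p : Ω₁ × Ω₂ × Ω₃ → ℝ) : Ω₁ × Ω₂ → ℝ := fun z => ∑ c, p (z.1, z.2, c)

/-- marginal on coordinates (1,3) -/
def m13 (p : Ω₁ × Ω₂ × Ω₃ → ℝ) : Ω₁ × Ω₃ → ℝ := fun z => ∑ b, p (z.1, b, z.2)

/-- marginal on coordinates (2,3) -/
def m23 (p : Ω₁ × Ω₂ × Ω₃ → ℝ) : Ω₂ × Ω₃ → ℝ := fun z => ∑ a, p (a, z.1, z.2)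

/-- mutual information I(X₁;X₂) -/
def I12 (p : Ω₁ × Ω₂ × Ω₃ → ℝ) : ℝ := ent (m1 p) + ent (m2 p) - ent (m12 p)

/-- mutual information I(X₁;Y) (Y the third coordinate) -/
def I13 (p : Ω₁ × Ω₂ × Ω₃ → ℝ) : ℝ := ent (m1 p) + ent (m3 p) - ent (m13 p)

/-- mutual information I(X₂;Y) -/
def I23 (p : Ω₁ × Ω₂ × Ω₃ → ℝ) : ℝ := ent (m2 p) + ent (m3 p) - ent (m23 p)

/-- joint mutual information I({X₁,X₂};Y) -/
def Ijoint (p : Ω₁ × Ω₂ × Ω₃ → ℝ) : ℝ := ent (m12 p) + ent (m3 p) - ent p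

/-- conditional mutual information I(X₁;X₂ | Y) -/
def CMI12_3 (p : Ω₁ × Ω₂ × Ω₃ → ℝ) : ℝ := ent (m13 p) + ent (m23 p) - ent p - ent (m3 p)

/-- conditional mutual information I(X₁;Y | X₂) -/
def CMI13_2 (p : Ω₁ × Ω₂ × Ω₃ → ℝ) : ℝ := ent (m12 p) + ent (m23 p) - ent p - ent (m2 p)

/-- conditional mutual information I(X₂;Y | X₁) -/
def CMI23_1 (p : Ω₁ × Ω₂ × Ω₃ → ℝ) : ℝ := ent (m12 p) + ent (m13 p) - ent p - ent (m1 p)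

/-- interaction information I(X₁;X₂;Y), defined as I(X₁;Y) - I(X₁;Y|X₂). -/
def interactionInfo (p : Ω₁ × Ω₂ × Ω₃ → ℝ) : ℝ := I13 p - CMI13_2 p

/-- Δ_{p_{1,2}}: distributions matching the (x₁,y) and (x₂,y) marginals of p. -/
def DeltaP (p : Ω₁ × Ω₂ × Ω₃ → ℝ) : Set (Ω₁ × Ω₂ × Ω₃ → ℝ) :=
  {q | IsProb q ∧ m13 q = m13 p ∧ m23 q = m23 p}

/-- Δ_{p_{1,2,12}}: distributions matching all pairwise marginals of p. -/
def DeltaAll (p : Ω₁ × Ω₂ × Ω₃ → ℝ) : Set (Ω₁ × Ω₂ × Ω₃ → ℝ) :=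
  {r | IsProb r ∧ m12 r = m12 p ∧ m13 r = m13 p ∧ m23 r = m23 p}

/-- Δ_{p_{12,y}}: couplings of the (x₁,x₂) marginal with the y marginal of p. -/
def DeltaCoup (p : Ω₁ × Ω₂ × Ω₃ → ℝ) : Set (Ω₁ × Ω₂ × Ω₃ → ℝ) :=
  {r | IsProb r ∧ m12 r = m12 p ∧ m3 r = m3 p}

/-- first marginal of a distribution on a product of two spaces -/
def mA {α β : Type*} [Fintype α] [Fintype β] (p : α × β → ℝ) : α → ℝ := fun a => ∑ b, p (a, b)

/-- second marginal of a distribution on a product of two spaces -/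
def mB {α β : Type*} [Fintype α] [Fintype β] (p : α × β → ℝ) : β → ℝ := fun b => ∑ a, p (a, b)

/-- mutual information of a joint distribution on a product of two spaces -/
def MI2 {α β : Type*} [Fintype α] [Fintype β] (p : α × β → ℝ) : ℝ := ent (mA p) + ent (mB p) - ent p

/-! The interaction information is `I(X₁;Y) + I(X₂;Y) - I({X₁,X₂};Y)`. The first two terms
are mutual informations of the marginals on `(X₁,Y)` and `(X₂,Y)`, so they agree for `p` and
every `q ∈ Δ_p`; hence `R - S = I_q(X₁;Y) + I_q(X₂;Y) - I_p({X₁,X₂};Y) = I_p(X₁;X₂;Y)`, the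
`I_q({X₁,X₂};Y)` terms cancelling. -/

theorem m1_eq_mA_m13 (r : Ω₁ × Ω₂ × Ω₃ → ℝ) : m1 r = mA (m13 r) :=
  funext fun _ => Finset.sum_comm

theorem m3_eq_mB_m13 (r : Ω₁ × Ω₂ × Ω₃ → ℝ) : m3 r = mB (m13 r) := rfl

theorem m2_eq_mA_m23 (r : Ω₁ × Ω₂ × Ω₃ → ℝ) : m2 r = mA (m23 r) :=
  funext fun _ => Finset.sum_comm

theorem m3_eq_mB_m23 (r : Ω₁ × Ω₂ × Ω₃ → ℝ) : m3 r = mB (m23 r) :=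
  funext fun _ => Finset.sum_comm

theorem I13_eq_MI2_m13 (r : Ω₁ × Ω₂ × Ω₃ → ℝ) : I13 r = MI2 (m13 r) := by
  rw [I13, MI2, m1_eq_mA_m13, m3_eq_mB_m13]

theorem I23_eq_MI2_m23 (r : Ω₁ × Ω₂ × Ω₃ → ℝ) : I23 r = MI2 (m23 r) := by
  rw [I23, MI2, m2_eq_mA_m23, m3_eq_mB_m23]

theorem interactionInfo_eq_I13_add_I23_sub_Ijoint (r : Ω₁ × Ω₂ × Ω₃ → ℝ) :
    interactionInfo r = I13 r + I23 r - Ijoint r := by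
  rw [interactionInfo, I13, I23, CMI13_2, Ijoint]
  ring

theorem redundancy_sub_synergy_general (p q : Ω₁ × Ω₂ × Ω₃ → ℝ)
    (hq : q ∈ DeltaP p) (R S : ℝ)
    (hR : R = interactionInfo q)
    (hS : S = Ijoint p - Ijoint q) :
    R - S = interactionInfo p := by
  obtain ⟨-, h13, h23⟩ := hq
  have hI13 : I13 q = I13 p := by rw [I13_eq_MI2_m13, I13_eq_MI2_m13, h13]
  have hI23 : I23 q = I23 p := by rw [I23_eq_MI2_m23, I23_eq_MI2_m23, h23]
  rw [hR, hS, interactionInfo_eq_I13_add_I23_sub_Ijoint,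
    interactionInfo_eq_I13_add_I23_sub_Ijoint, hI13, hI23]
  ring

/-- with R, U₁, U₂, S defined via a common optimizer q* ∈ Δ_{p_{1,2}},
R - S = I_p(X₁;X₂;Y). -/
theorem redundancy_sub_synergy (p q : Ω₁ × Ω₂ × Ω₃ → ℝ) (hp : IsProb p)
    (hq : q ∈ DeltaP p) (R U1 U2 S : ℝ)
    (hR : R = interactionInfo q)
    (hU1 : U1 = CMI13_2 q) (hU2 : U2 = CMI23_1 q)
    (hS : S = Ijoint p - Ijoint q) :
    R - S = interactionInfo p :=
  redundancy_sub_synergy_general p q hq R S hR hS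

end PaperPID
end
end

section
/- Let f* be the Bayes optimal multimodal classifier on finite spaces, with some bounded loss ℓ taking values in [0,1], and let f1* be the Bayes optimal classifier using only X1. Then |L(f1*) - L(f*)|² ≤ I_p(X2;Y|X1), where L(f) denotes expected loss under p. -/
open Finset

noncomputable section

namespace PaperPID

variable {Ω₁ Ω₂ Ω₃ : Type*} [Fintype Ω₁] [Fintype Ω₂] [Fintype Ω₃]

/-!
Let `q = p(x₁, x₂) p(y | x₁)`. Under `q` the label is independent of `X₂` given `X₁`, so the
Bayes optimal unimodal classifier is optimal among all classifiers: `L_p(f₁*) ≤ L_q(f*)`.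
As `L_p(f*) ≤ L_p(f₁*)` and the loss takes values in `[0, 1]`, the gap is at most `TV(p, q)`, and
`TV(p, q)² ≤ KL(p ‖ q) = ln 2 · I(X₂; Y | X₁)` by a Pinsker-type bound through the Hellinger
distance.
-/

section Divergence

variable {α : Type*} [Fintype α]

open Real in
/-- `log (a / b) = 2 log (√a / √b) ≥ 2 (1 - √b / √a)`. -/
theorem sq_sqrt_sub_sqrt_le_mul_log_div {a b : ℝ} (ha : 0 ≤ a) (hb : 0 ≤ b)
    (hab : b = 0 → a = 0) : (√a - √b) ^ 2 ≤ a * log (a / b) - a + b := by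
  rcases hb.eq_or_lt with rfl | hb
  · simp [hab rfl]
  rcases ha.eq_or_lt with rfl | ha
  · simp [sq_sqrt hb.le]
  obtain ⟨s, hs, rfl⟩ : ∃ s, 0 < s ∧ a = s ^ 2 := ⟨√a, sqrt_pos.2 ha, (sq_sqrt ha.le).symm⟩
  obtain ⟨t, ht, rfl⟩ : ∃ t, 0 < t ∧ b = t ^ 2 := ⟨√b, sqrt_pos.2 hb, (sq_sqrt hb.le).symm⟩
  have hlog := one_sub_inv_le_log_of_pos (div_pos hs ht)
  rw [inv_div] at hlog
  have hst : s ^ 2 * (t / s) = s * t := by field_simp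
  rw [sqrt_sq hs.le, sqrt_sq ht.le, ← div_pow, log_pow]
  nlinarith [mul_le_mul_of_nonneg_left hlog (sq_nonneg s)]

theorem sq_sum_abs_sub_le_sum_sq_sqrt_sub_sqrt_mul {p q : α → ℝ} (hp : ∀ a, 0 ≤ p a)
    (hq : ∀ a, 0 ≤ q a) :
    (∑ a, |p a - q a|) ^ 2 ≤ (∑ a, (√(p a) - √(q a)) ^ 2) * (2 * ∑ a, (p a + q a)) := by
  have habs : ∀ a, |p a - q a| = |√(p a) - √(q a)| * (√(p a) + √(q a)) := fun a => by
    rw [← abs_of_nonneg (by positivity : 0 ≤ √(p a) + √(q a)), ← abs_mul]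
    congr 1
    linear_combination -Real.sq_sqrt (hp a) + Real.sq_sqrt (hq a)
  have hsum : ∑ a, (√(p a) + √(q a)) ^ 2 ≤ 2 * ∑ a, (p a + q a) := by
    rw [Finset.mul_sum]
    refine Finset.sum_le_sum fun a _ => ?_
    nlinarith [sq_nonneg (√(p a) - √(q a)), Real.sq_sqrt (hp a), Real.sq_sqrt (hq a)]
  calc (∑ a, |p a - q a|) ^ 2
      ≤ (∑ a, |√(p a) - √(q a)| ^ 2) * ∑ a, (√(p a) + √(q a)) ^ 2 := by
        simp only [habs]
        exact Finset.sum_mul_sq_le_sq_mul_sq _ _ _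
    _ ≤ _ := by
        simp only [sq_abs]
        exact mul_le_mul_of_nonneg_left hsum (by positivity)

/-- Pinsker's inequality with constant `1` instead of `1 / 2`, through the Hellinger distance. -/
theorem sq_half_sum_abs_sub_le_sum_mul_log_div {p q : α → ℝ} (hp : IsProb p) (hq : IsProb q)
    (hpq : ∀ a, q a = 0 → p a = 0) :
    ((∑ a, |p a - q a|) / 2) ^ 2 ≤ ∑ a, p a * Real.log (p a / q a) := by
  have hH : ∑ a, (√(p a) - √(q a)) ^ 2 ≤ ∑ a, p a * Real.log (p a / q a) := by
    calc ∑ a, (√(p a) - √(q a)) ^ 2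
        ≤ ∑ a, (p a * Real.log (p a / q a) - p a + q a) :=
          Finset.sum_le_sum fun a _ => sq_sqrt_sub_sqrt_le_mul_log_div (hp.1 a) (hq.1 a) (hpq a)
      _ = ∑ a, p a * Real.log (p a / q a) := by
          rw [Finset.sum_add_distrib, Finset.sum_sub_distrib, hp.2, hq.2, sub_add_cancel]
  have hsq := sq_sum_abs_sub_le_sum_sq_sqrt_sub_sqrt_mul hp.1 hq.1
  rw [Finset.sum_add_distrib, hp.2, hq.2] at hsq
  rw [div_pow]
  linarith

theorem sum_mul_sub_sum_mul_le_half_sum_abs {p q h : α → ℝ} (hpq : ∑ a, p a = ∑ a, q a)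
    (hh : ∀ a, h a ∈ Set.Icc (0 : ℝ) 1) :
    ∑ a, q a * h a - ∑ a, p a * h a ≤ (∑ a, |p a - q a|) / 2 := by
  have hpt : ∀ a, q a * h a - p a * h a ≤ (q a - p a + |p a - q a|) / 2 := fun a => by
    obtain ⟨h0, h1⟩ := hh a
    rcases le_total (p a) (q a) with hle | hle
    · rw [abs_of_nonpos (sub_nonpos.2 hle)]; nlinarith
    · rw [abs_of_nonneg (sub_nonneg.2 hle)]; nlinarith
  calc ∑ a, q a * h a - ∑ a, p a * h a
      ≤ ∑ a, (q a - p a + |p a - q a|) / 2 := by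
        rw [← Finset.sum_sub_distrib]; exact Finset.sum_le_sum fun a _ => hpt a
    _ = (∑ a, |p a - q a|) / 2 := by
        rw [← Finset.sum_div, Finset.sum_add_distrib, Finset.sum_sub_distrib, hpq, sub_self,
          zero_add]

end Divergence

section Marginals

variable (p : Ω₁ × Ω₂ × Ω₃ → ℝ)

theorem sum_mul_eq_sum_m1_mul (g : Ω₁ → ℝ) : ∑ z, p z * g z.1 = ∑ a, m1 p a * g a := by
  simp only [Fintype.sum_prod_type, m1, Finset.sum_mul]

theorem sum_mul_eq_sum_m12_mul (g : Ω₁ × Ω₂ → ℝ) :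
    ∑ z, p z * g (z.1, z.2.1) = ∑ w, m12 p w * g w := by
  simp only [Fintype.sum_prod_type, m12, Finset.sum_mul]

theorem sum_mul_eq_sum_m13_mul (g : Ω₁ × Ω₃ → ℝ) :
    ∑ z, p z * g (z.1, z.2.2) = ∑ w, m13 p w * g w := by
  simp only [Fintype.sum_prod_type, m13, Finset.sum_mul]
  exact Finset.sum_congr rfl fun _ _ => Finset.sum_comm

set_option linter.unusedSectionVars false in
theorem sum_m13 (a : Ω₁) : ∑ c, m13 p (a, c) = m1 p a := Finset.sum_comm

variable {p} (hp : IsProb p)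
include hp

theorem m12_nonneg (w : Ω₁ × Ω₂) : 0 ≤ m12 p w := Finset.sum_nonneg fun _ _ => hp.1 _

theorem m13_nonneg (w : Ω₁ × Ω₃) : 0 ≤ m13 p w := Finset.sum_nonneg fun _ _ => hp.1 _

theorem m1_nonneg (a : Ω₁) : 0 ≤ m1 p a := Finset.sum_nonneg fun b _ => m12_nonneg hp (a, b)

theorem le_m12 (z : Ω₁ × Ω₂ × Ω₃) : p z ≤ m12 p (z.1, z.2.1) :=
  Finset.single_le_sum (fun c _ => hp.1 (z.1, z.2.1, c)) (Finset.mem_univ z.2.2)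

theorem le_m13 (z : Ω₁ × Ω₂ × Ω₃) : p z ≤ m13 p (z.1, z.2.2) :=
  Finset.single_le_sum (fun b _ => hp.1 (z.1, b, z.2.2)) (Finset.mem_univ z.2.1)

theorem le_m1 (z : Ω₁ × Ω₂ × Ω₃) : p z ≤ m1 p z.1 :=
  (le_m12 hp z).trans <|
    Finset.single_le_sum (fun b _ => m12_nonneg hp (z.1, b)) (Finset.mem_univ z.2.1)

theorem m13_eq_zero_of_m1_eq_zero {a : Ω₁} (ha : m1 p a = 0) (c : Ω₃) : m13 p (a, c) = 0 :=
  (Finset.sum_eq_zero_iff_of_nonneg fun c _ => m13_nonneg hp (a, c)).1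
    ((sum_m13 p a).trans ha) c (Finset.mem_univ c)

end Marginals

/-- `p(x₁, x₂) p(y | x₁)`, under which `X₂ ⊥ Y | X₁`; it vanishes where `p(x₁) = 0`
since `0 / 0 = 0`. -/
def condIndepProj (p : Ω₁ × Ω₂ × Ω₃ → ℝ) : Ω₁ × Ω₂ × Ω₃ → ℝ :=
  fun z => m12 p (z.1, z.2.1) * m13 p (z.1, z.2.2) / m1 p z.1

section CondIndepProj

variable {p : Ω₁ × Ω₂ × Ω₃ → ℝ}

theorem sum_condIndepProj (p : Ω₁ × Ω₂ × Ω₃ → ℝ) :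
    ∑ z, condIndepProj p z = ∑ z, p z := by
  have hrow : ∀ a, ∑ b, ∑ c, condIndepProj p (a, b, c) = m1 p a := fun a => by
    simp only [condIndepProj, ← Finset.sum_div, ← Finset.mul_sum, ← Finset.sum_mul, sum_m13]
    exact mul_self_div_self (m1 p a)
  simp only [Fintype.sum_prod_type, hrow, m1]

theorem isProb_condIndepProj (hp : IsProb p) : IsProb (condIndepProj p) :=
  ⟨fun _ => div_nonneg (mul_nonneg (m12_nonneg hp _) (m13_nonneg hp _)) (m1_nonneg hp _),
    (sum_condIndepProj p).trans hp.2⟩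

theorem condIndepProj_pos (hp : IsProb p) {z : Ω₁ × Ω₂ × Ω₃} (hz : 0 < p z) :
    0 < condIndepProj p z :=
  div_pos (mul_pos (hz.trans_le (le_m12 hp z)) (hz.trans_le (le_m13 hp z)))
    (hz.trans_le (le_m1 hp z))

theorem CMI23_1_eq_sum (p : Ω₁ × Ω₂ × Ω₃ → ℝ) :
    CMI23_1 p = ∑ z, p z * (Real.logb 2 (p z) + Real.logb 2 (m1 p z.1)
      - Real.logb 2 (m12 p (z.1, z.2.1)) - Real.logb 2 (m13 p (z.1, z.2.2))) := by
  rw [CMI23_1, ent, ent, ent, ent, ← sum_mul_eq_sum_m1_mul, ← sum_mul_eq_sum_m12_mul,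
    ← sum_mul_eq_sum_m13_mul]
  simp only [mul_add, mul_sub, Finset.sum_add_distrib, Finset.sum_sub_distrib]
  ring

theorem sum_mul_log_div_condIndepProj (hp : IsProb p) :
    ∑ z, p z * Real.log (p z / condIndepProj p z) = Real.log 2 * CMI23_1 p := by
  rw [CMI23_1_eq_sum, Finset.mul_sum]
  refine Finset.sum_congr rfl fun z _ => ?_
  rcases (hp.1 z).eq_or_lt with hz | hz
  · simp [← hz]
  have h12 := hz.trans_le (le_m12 hp z)
  have h13 := hz.trans_le (le_m13 hp z)
  have h1 := hz.trans_le (le_m1 hp z)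
  have hlog2 : Real.log 2 ≠ 0 := (Real.log_pos one_lt_two).ne'
  rw [condIndepProj, Real.log_div hz.ne' (by positivity), Real.log_div (by positivity) h1.ne',
    Real.log_mul h12.ne' h13.ne']
  simp only [Real.logb]
  field_simp
  ring

theorem sq_half_sum_abs_sub_condIndepProj_le (hp : IsProb p) :
    ((∑ z, |p z - condIndepProj p z|) / 2) ^ 2 ≤ Real.log 2 * CMI23_1 p := by
  rw [← sum_mul_log_div_condIndepProj hp]
  refine sq_half_sum_abs_sub_le_sum_mul_log_div hp (isProb_condIndepProj hp) fun z hq => ?_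
  by_contra hz
  exact (condIndepProj_pos hp ((hp.1 z).lt_of_ne' hz)).ne' hq

theorem CMI23_1_nonneg (hp : IsProb p) : 0 ≤ CMI23_1 p := by
  have h := (sq_nonneg _).trans (sq_half_sum_abs_sub_condIndepProj_le hp)
  have hlog2 := Real.log_pos one_lt_two
  nlinarith

end CondIndepProj

theorem apply_le_of_forall_sum_le {ι β : Type*} [Fintype ι] [DecidableEq ι] {F : ι → β → ℝ}
    {f : ι → β} (hf : ∀ g : ι → β, ∑ i, F i (f i) ≤ ∑ i, F i (g i)) (i : ι) (y : β) :
    F i (f i) ≤ F i y := by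
  have h := hf (Function.update f i y)
  have hrest : ∑ j ∈ Finset.univ.erase i, F j (Function.update f i y j) =
      ∑ j ∈ Finset.univ.erase i, F j (f j) :=
    Finset.sum_congr rfl fun j hj => by rw [Function.update_of_ne (Finset.ne_of_mem_erase hj)]
  rw [← Finset.add_sum_erase _ _ (Finset.mem_univ i),
    ← Finset.add_sum_erase _ _ (Finset.mem_univ i), Function.update_self, hrest] at h
  linarith

section BayesRisk

variable {Yhat : Type*} (p : Ω₁ × Ω₂ × Ω₃ → ℝ) (ℓ : Yhat → Ω₃ → ℝ)

/-- A unimodal classifier `g₁` is the multimodal classifier `g₁ ∘ Prod.fst`. -/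
def risk (g : Ω₁ × Ω₂ → Yhat) : ℝ := ∑ z, p z * ℓ (g (z.1, z.2.1)) z.2.2

/-- The risk of predicting `y` given `X₁ = a`, weighted by `p(a)`. -/
def condRisk (a : Ω₁) (y : Yhat) : ℝ := ∑ c, m13 p (a, c) * ℓ y c

theorem risk_comp_fst (g₁ : Ω₁ → Yhat) :
    risk p ℓ (g₁ ∘ Prod.fst) = ∑ a, condRisk p ℓ a (g₁ a) :=
  (sum_mul_eq_sum_m13_mul p fun w => ℓ (g₁ w.1) w.2).trans (Fintype.sum_prod_type _)

theorem risk_condIndepProj (g : Ω₁ × Ω₂ → Yhat) :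
    risk (condIndepProj p) ℓ g =
      ∑ a, ∑ b, m12 p (a, b) / m1 p a * condRisk p ℓ a (g (a, b)) := by
  simp only [risk, condRisk, condIndepProj, Fintype.sum_prod_type, Finset.mul_sum]
  exact Finset.sum_congr rfl fun a _ => Finset.sum_congr rfl fun b _ =>
    Finset.sum_congr rfl fun c _ => by ring

/-- Under `condIndepProj p` the label carries no information beyond `X₁`, so no multimodal
classifier beats the Bayes optimal unimodal one. -/
theorem risk_comp_fst_le_risk_condIndepProj {p} (hp : IsProb p) {f₁ : Ω₁ → Yhat}
    (hf₁ : ∀ g₁ : Ω₁ → Yhat, risk p ℓ (f₁ ∘ Prod.fst) ≤ risk p ℓ (g₁ ∘ Prod.fst))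
    (g : Ω₁ × Ω₂ → Yhat) : risk p ℓ (f₁ ∘ Prod.fst) ≤ risk (condIndepProj p) ℓ g := by
  classical
  have hopt := apply_le_of_forall_sum_le (F := condRisk p ℓ) (f := f₁)
    (by simpa only [risk_comp_fst] using hf₁)
  rw [risk_comp_fst, risk_condIndepProj]
  refine Finset.sum_le_sum fun a _ => ?_
  rcases (m1_nonneg hp a).eq_or_lt with ha | ha
  · simp [condRisk, m13_eq_zero_of_m1_eq_zero hp ha.symm, ← ha]
  calc condRisk p ℓ a (f₁ a)
      = ∑ b, m12 p (a, b) / m1 p a * condRisk p ℓ a (f₁ a) := by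
        rw [← Finset.sum_mul, ← Finset.sum_div, show ∑ b, m12 p (a, b) = m1 p a from rfl,
          div_self ha.ne', one_mul]
    _ ≤ _ := Finset.sum_le_sum fun b _ =>
        mul_le_mul_of_nonneg_left (hopt a _) (div_nonneg (m12_nonneg hp _) ha.le)

end BayesRisk

theorem unimodal_multimodal_loss_gap_general {Yhat : Type*}
    (p : Ω₁ × Ω₂ × Ω₃ → ℝ) (hp : IsProb p)
    (ℓ : Yhat → Ω₃ → ℝ) (hℓ : ∀ a b, ℓ a b ∈ Set.Icc (0 : ℝ) 1)
    (f : Ω₁ × Ω₂ → Yhat) (f1 : Ω₁ → Yhat)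
    (hf : ∀ g : Ω₁ × Ω₂ → Yhat,
      ∑ z : Ω₁ × Ω₂ × Ω₃, p z * ℓ (f (z.1, z.2.1)) z.2.2 ≤
      ∑ z : Ω₁ × Ω₂ × Ω₃, p z * ℓ (g (z.1, z.2.1)) z.2.2)
    (hf1 : ∀ g1 : Ω₁ → Yhat,
      ∑ z : Ω₁ × Ω₂ × Ω₃, p z * ℓ (f1 z.1) z.2.2 ≤
      ∑ z : Ω₁ × Ω₂ × Ω₃, p z * ℓ (g1 z.1) z.2.2) :
    (∑ z : Ω₁ × Ω₂ × Ω₃, p z * ℓ (f1 z.1) z.2.2 -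
     ∑ z : Ω₁ × Ω₂ × Ω₃, p z * ℓ (f (z.1, z.2.1)) z.2.2) ^ 2 ≤ CMI23_1 p := by
  change (risk p ℓ (f1 ∘ Prod.fst) - risk p ℓ f) ^ 2 ≤ CMI23_1 p
  set tv := (∑ z, |p z - condIndepProj p z|) / 2
  have hgap_nonneg : 0 ≤ risk p ℓ (f1 ∘ Prod.fst) - risk p ℓ f := sub_nonneg.2 (hf _)
  have hgap_le_tv : risk p ℓ (f1 ∘ Prod.fst) - risk p ℓ f ≤ tv :=
    (sub_le_sub_right (risk_comp_fst_le_risk_condIndepProj ℓ hp hf1 f) _).trans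
      (sum_mul_sub_sum_mul_le_half_sum_abs (sum_condIndepProj p).symm fun _ => hℓ _ _)
  have hpinsker : tv ^ 2 ≤ Real.log 2 * CMI23_1 p := sq_half_sum_abs_sub_condIndepProj_le hp
  have hlog2 : Real.log 2 ≤ 1 := (Real.log_le_sub_one_of_pos two_pos).trans (by norm_num)
  calc (risk p ℓ (f1 ∘ Prod.fst) - risk p ℓ f) ^ 2
      ≤ tv ^ 2 := pow_le_pow_left₀ hgap_nonneg hgap_le_tv 2
    _ ≤ Real.log 2 * CMI23_1 p := hpinsker
    _ ≤ CMI23_1 p := mul_le_of_le_one_left (CMI23_1_nonneg hp) hlog2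

/-- if f* is Bayes optimal among multimodal classifiers and f₁* among
unimodal (X₁-only) classifiers, for a loss ℓ with values in [0,1], then
|L(f₁*) - L(f*)|² ≤ I_p(X₂;Y|X₁). -/
theorem unimodal_multimodal_loss_gap {Yhat : Type*} [Fintype Yhat]
    (p : Ω₁ × Ω₂ × Ω₃ → ℝ) (hp : IsProb p)
    (ℓ : Yhat → Ω₃ → ℝ) (hℓ : ∀ a b, ℓ a b ∈ Set.Icc (0 : ℝ) 1)
    (f : Ω₁ × Ω₂ → Yhat) (f1 : Ω₁ → Yhat)
    (hf : ∀ g : Ω₁ × Ω₂ → Yhat,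
      ∑ z : Ω₁ × Ω₂ × Ω₃, p z * ℓ (f (z.1, z.2.1)) z.2.2 ≤
      ∑ z : Ω₁ × Ω₂ × Ω₃, p z * ℓ (g (z.1, z.2.1)) z.2.2)
    (hf1 : ∀ g1 : Ω₁ → Yhat,
      ∑ z : Ω₁ × Ω₂ × Ω₃, p z * ℓ (f1 z.1) z.2.2 ≤
      ∑ z : Ω₁ × Ω₂ × Ω₃, p z * ℓ (g1 z.1) z.2.2) :
    (∑ z : Ω₁ × Ω₂ × Ω₃, p z * ℓ (f1 z.1) z.2.2 -
     ∑ z : Ω₁ × Ω₂ × Ω₃, p z * ℓ (f (z.1, z.2.1)) z.2.2) ^ 2 ≤ CMI23_1 p :=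
  unimodal_multimodal_loss_gap_general p hp ℓ hℓ f f1 hf hf1

end PaperPID
end
end

section
/- Feder–Merhav lower bound: for finite random variables (X,Y) with joint distribution p, the accuracy of the Bayes optimal classifier f*(x) = argmax_y p(y|x) satisfies P_acc(f*) = E_x[max_y p(y|x)] ≥ 2^{-H_p(Y|X)} = 2^{I_p(X;Y) - H_p(Y)}. -/
open Finset

noncomputable section

namespace PaperPID

variable {Ω₁ Ω₂ Ω₃ : Type*} [Fintype Ω₁] [Fintype Ω₂] [Fintype Ω₃]

/-! Write `w x = ∑_y p(x,y)` and `M x = max_y p(x,y)`. Since `p(x,y) ≤ M x`, the contribution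
`∑_y p(x,y) log p(x,y) - w x log w x` of the row `x` to `-H(Y|X)` is at most `w x log (M x / w x)`;
this is `H_∞(Y|X=x) ≤ H(Y|X=x)`. Convexity of `t ↦ 2^t` then gives
`2^(-H(Y|X)) ≤ ∑_x w x 2^(log (M x / w x)) = ∑_x M x`. -/

section

variable {ι : Type*} (s : Finset ι) {b : ℝ}

theorem sum_mul_logb_le_sum_mul_logb_of_le (hb : 1 < b) {q : ι → ℝ} {m : ℝ}
    (hq : ∀ i ∈ s, 0 ≤ q i) (hm : ∀ i ∈ s, q i ≤ m) :
    ∑ i ∈ s, q i * Real.logb b (q i) ≤ (∑ i ∈ s, q i) * Real.logb b m := by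
  rw [Finset.sum_mul]
  refine Finset.sum_le_sum fun i hi => ?_
  rcases (hq i hi).eq_or_lt with hzero | hpos
  · simp [← hzero]
  · exact mul_le_mul_of_nonneg_left (Real.logb_le_logb_of_le hb hpos (hm i hi)) hpos.le

theorem rpow_sum_mul_logb_sub_logb_le (hb₀ : 0 < b) (hb₁ : b ≠ 1) {w M : ι → ℝ}
    (hw : ∀ i ∈ s, 0 ≤ w i) (hw₁ : ∑ i ∈ s, w i = 1) (hM : ∀ i ∈ s, 0 ≤ M i)
    (hwM : ∀ i ∈ s, 0 < w i → 0 < M i) :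
    b ^ (∑ i ∈ s, w i * (Real.logb b (M i) - Real.logb b (w i))) ≤ ∑ i ∈ s, M i := by
  calc b ^ (∑ i ∈ s, w i * (Real.logb b (M i) - Real.logb b (w i)))
      ≤ ∑ i ∈ s, w i * b ^ (Real.logb b (M i) - Real.logb b (w i)) := by
        simpa using (convexOn_rpow_left hb₀).map_sum_le hw hw₁ fun i _ => Set.mem_univ _
    _ ≤ ∑ i ∈ s, M i := by
        refine Finset.sum_le_sum fun i hi => ?_
        rcases (hw i hi).eq_or_lt with hzero | hpos
        · simpa [← hzero] using hM i hi
        · rw [Real.rpow_sub hb₀, Real.rpow_logb hb₀ hb₁ (hwM i hi hpos),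
            Real.rpow_logb hb₀ hb₁ hpos, mul_div_cancel₀ _ hpos.ne']

end

theorem MI2_sub_ent_mB_eq_sum {α β : Type*} [Fintype α] [Fintype β] (p : α × β → ℝ) :
    MI2 p - ent (mB p) =
      ∑ a, (∑ b, p (a, b) * Real.logb 2 (p (a, b)) - mA p a * Real.logb 2 (mA p a)) := by
  simp only [MI2, ent, Fintype.sum_prod_type, Finset.sum_sub_distrib]
  ring

/-- Feder–Merhav lower bound: the Bayes optimal accuracy
E_x[max_y p(y|x)] = Σ_x max_y p(x,y) is at least 2^(I_p(X;Y) - H_p(Y)). -/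
theorem feder_merhav_lower_bound [Nonempty Ω₃] (p : Ω₁ × Ω₃ → ℝ) (hp : IsProb p) :
    (2 : ℝ) ^ (MI2 p - ent (mB p)) ≤
      ∑ x : Ω₁, Finset.univ.sup' Finset.univ_nonempty (fun y : Ω₃ => p (x, y)) := by
  set M : Ω₁ → ℝ := fun x => Finset.univ.sup' Finset.univ_nonempty (fun y : Ω₃ => p (x, y))
  have hpM (x : Ω₁) (y : Ω₃) : p (x, y) ≤ M x := Finset.le_sup' (fun y => p (x, y)) (mem_univ y)
  have hw (x : Ω₁) : 0 ≤ mA p x := Finset.sum_nonneg fun y _ => hp.1 (x, y)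
  have hw₁ : ∑ x, mA p x = 1 := (Fintype.sum_prod_type p).symm.trans hp.2
  have hM (x : Ω₁) : 0 ≤ M x := (hp.1 _).trans (hpM x (Classical.arbitrary Ω₃))
  have hwM (x : Ω₁) (hx : 0 < mA p x) : 0 < M x :=
    (Finset.lt_sup'_iff _).2 ((Finset.sum_pos_iff_of_nonneg fun y _ => hp.1 (x, y)).1 hx)
  have hrow (x : Ω₁) :
      ∑ y, p (x, y) * Real.logb 2 (p (x, y)) - mA p x * Real.logb 2 (mA p x) ≤
        mA p x * (Real.logb 2 (M x) - Real.logb 2 (mA p x)) := by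
    rw [mul_sub]
    exact sub_le_sub_right (sum_mul_logb_le_sum_mul_logb_of_le univ one_lt_two
      (fun y _ => hp.1 (x, y)) fun y _ => hpM x y) _
  calc (2 : ℝ) ^ (MI2 p - ent (mB p))
      ≤ 2 ^ (∑ x, mA p x * (Real.logb 2 (M x) - Real.logb 2 (mA p x))) := by
        rw [MI2_sub_ent_mB_eq_sum]
        exact Real.rpow_le_rpow_of_exponent_le one_le_two (Finset.sum_le_sum fun x _ => hrow x)
    _ ≤ ∑ x, M x := rpow_sum_mul_logb_sub_logb_le univ two_pos (by norm_num)
        (fun x _ => hw x) hw₁ (fun x _ => hM x) fun x _ => hwM x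

end PaperPID
end
end

section
/- Greatest lower bound for couplings: let p, q be probability distributions on [n] sorted in non-increasing order, and define a = (a_1,…,a_n) recursively by a_i = min(Σ_{j≤i} p_j, Σ_{j≤i} q_j) - Σ_{j<i} a_j. Then a is a probability distribution and every coupling M of p and q (i.e., M has row sums p and column sums q) is majorized by a in the sense that, for every k, the sum of the k largest entries of M is at most Σ_{j≤k} a_j, and consequently H(M) ≥ H(a). -/
open Finset

noncomputable section

namespace PaperPID

variable {Ω₁ Ω₂ Ω₃ : Type*} [Fintype Ω₁] [Fintype Ω₂] [Fintype Ω₃]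

/-- prefix set of `Fin n` -/
def preS (n k : ℕ) : Finset (Fin n) := univ.filter (fun j => (j : ℕ) < k)

lemma preS_image_val (n k : ℕ) : (preS n k).image Fin.val = Finset.range (min k n) := by
  ext l
  simp only [preS, mem_image, mem_filter, mem_univ, true_and, mem_range, lt_min_iff]
  constructor
  · rintro ⟨j, hj, rfl⟩; exact ⟨hj, j.isLt⟩
  · rintro ⟨h1, h2⟩; exact ⟨⟨l, h2⟩, h1, rfl⟩

lemma preS_card (n k : ℕ) : (preS n k).card = min k n := by
  rw [← Finset.card_range (min k n), ← preS_image_val n k,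
    Finset.card_image_of_injective _ Fin.val_injective]

lemma sum_preS (n k : ℕ) (f : Fin n → ℝ) (f' : ℕ → ℝ) (hf : ∀ i : Fin n, f' i = f i) :
    ∑ j ∈ preS n k, f j = ∑ j ∈ Finset.range (min k n), f' j := by
  rw [← preS_image_val n k, Finset.sum_image (by exact fun x _ y _ h => Fin.val_injective h)]
  exact Finset.sum_congr rfl fun i _ => (hf i).symm

lemma preS_mono (n : ℕ) {k k' : ℕ} (h : k ≤ k') : preS n k ⊆ preS n k' := by
  intro j; simp only [preS, mem_filter, mem_univ, true_and]; omega

lemma preS_univ (n : ℕ) : preS n n = univ := by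
  ext j; simp [preS, j.isLt]

/-- sum over any finset is at most sum over the prefix of same size, for antitone f -/
lemma sum_le_sum_preS {n : ℕ} (p : Fin n → ℝ) (hp : Antitone p) (R : Finset (Fin n)) :
    ∑ i ∈ R, p i ≤ ∑ j ∈ preS n R.card, p j := by
  classical
  set r := R.card with hr
  have hrn : r ≤ n := by
    simpa using R.card_le_univ
  have E := R.orderIsoOfFin (rfl : R.card = r)
  have hmono : StrictMono fun j : Fin r => ((E j : Fin n) : ℕ) :=
    Fin.val_strictMono.comp ((Subtype.strictMono_coe _).comp E.strictMono)
  have hle : ∀ j : Fin r, (j : ℕ) ≤ ((E j : Fin n) : ℕ) := by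
    intro j
    obtain ⟨k, hk⟩ := j
    induction k with
    | zero => exact Nat.zero_le _
    | succ k ih =>
      have h1 : ((E ⟨k, Nat.lt_of_succ_lt hk⟩ : Fin n) : ℕ) < ((E ⟨k+1, hk⟩ : Fin n) : ℕ) :=
        hmono (Fin.mk_lt_mk.mpr (Nat.lt_succ_self k))
      have h2 := ih (Nat.lt_of_succ_lt hk)
      exact Nat.succ_le_of_lt (Nat.lt_of_le_of_lt h2 h1)
  have h1 : ∑ i ∈ R, p i = ∑ j : Fin r, p (E j) := by
    rw [← Finset.sum_coe_sort R p]
    exact (Equiv.sum_comp E.toEquiv (fun x => p x)).symm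
  have h2 : ∑ j ∈ preS n r, p j = ∑ j : Fin r, p ⟨j, lt_of_lt_of_le j.isLt hrn⟩ := by
    rw [sum_preS n r p (fun l => if h : l < n then p ⟨l, h⟩ else 0)
      (fun i => by simp [i.isLt]), Nat.min_eq_left hrn, ← Fin.sum_univ_eq_sum_range]
    exact Finset.sum_congr rfl fun j _ => by simp [Nat.lt_of_lt_of_le j.isLt hrn]
  rw [h1, h2]
  refine Finset.sum_le_sum fun j _ => hp ?_
  exact (Fin.mk_le_of_le_val (hle j))

/-- convexity tangent inequality for x ↦ x log x -/
lemma mul_log_tangent {x y : ℝ} (hx : 0 < x) (hy : 0 ≤ y) :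
    x * Real.log x - y * Real.log y ≤ (Real.log x + 1) * (x - y) := by
  rcases hy.lt_or_eq with hy' | hy'
  · have h := Real.log_le_sub_one_of_pos (show 0 < x / y by positivity)
    rw [Real.log_div hx.ne' hy'.ne'] at h
    have h2 : y * (Real.log x - Real.log y) ≤ y * (x / y - 1) := by
      exact mul_le_mul_of_nonneg_left h hy
    have h3 : y * (x / y - 1) = x - y := by field_simp
    nlinarith
  · rw [← hy']
    simp only [zero_mul, sub_zero, mul_sub, mul_zero]
    nlinarith [Real.log_le_sub_one_of_pos hx]

/-- Hardy–Littlewood–Pólya style inequality for x log x. -/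
lemma hlp (m : ℕ) (x y : ℕ → ℝ)
    (hx0 : ∀ i, 0 ≤ x i) (hy0 : ∀ i, 0 ≤ y i)
    (hxa : ∀ i j, i ≤ j → x j ≤ x i)
    (hmaj : ∀ k, k ≤ m → ∑ j ∈ Finset.range k, x j ≤ ∑ j ∈ Finset.range k, y j)
    (heq : ∑ j ∈ Finset.range m, x j = ∑ j ∈ Finset.range m, y j) :
    ∑ j ∈ Finset.range m, x j * Real.log (x j) ≤ ∑ j ∈ Finset.range m, y j * Real.log (y j) := by
  classical
  -- if x k = 0 for some k ≤ m then partial sums agree at k and y vanishes on [k, m)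
  have key0 : ∀ k, k ≤ m → (∀ j, k ≤ j → x j = 0) →
      (∑ j ∈ Finset.range k, x j = ∑ j ∈ Finset.range k, y j) ∧
      (∀ j, k ≤ j → j < m → y j = 0) := by
    intro k hk hz
    have hsplitx : ∑ j ∈ Finset.range k, x j = ∑ j ∈ Finset.range m, x j := by
      rw [Finset.range_eq_Ico, Finset.range_eq_Ico, ← Finset.sum_Ico_consecutive _ (Nat.zero_le k) hk]
      have : ∑ j ∈ Finset.Ico k m, x j = 0 :=
        Finset.sum_eq_zero fun j hj => hz j (Finset.mem_Ico.mp hj).1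
      rw [this, add_zero]
    have hsplity : ∑ j ∈ Finset.range m, y j
        = ∑ j ∈ Finset.range k, y j + ∑ j ∈ Finset.Ico k m, y j := by
      rw [Finset.range_eq_Ico, Finset.range_eq_Ico, ← Finset.sum_Ico_consecutive _ (Nat.zero_le k) hk]
    have hIco0 : ∑ j ∈ Finset.Ico k m, y j ≤ 0 := by
      have h1 := hmaj k hk
      rw [hsplitx, heq, hsplity] at h1
      linarith
    have hIco : ∑ j ∈ Finset.Ico k m, y j = 0 :=
      le_antisymm hIco0 (Finset.sum_nonneg fun j _ => hy0 j)
    constructor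
    · rw [hsplitx, heq, hsplity, hIco, add_zero]
    · intro j hj1 hj2
      have := (Finset.sum_eq_zero_iff_of_nonneg (fun i _ => hy0 i)).mp hIco j
        (Finset.mem_Ico.mpr ⟨hj1, hj2⟩)
      exact this
  set c : ℕ → ℝ := fun j => Real.log (x j) + 1 with hc
  set d : ℕ → ℝ := fun j => x j - y j with hd
  have hterm : ∀ j ∈ Finset.range m,
      x j * Real.log (x j) - y j * Real.log (y j) ≤ c j * d j := by
    intro j hj
    rcases (hx0 j).lt_or_eq with hxj | hxj
    · exact mul_log_tangent hxj (hy0 j)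
    · have hz : ∀ i, j ≤ i → x i = 0 := fun i hi =>
        le_antisymm (by rw [hxj]; exact hxa j i hi) (hx0 i)
      have hyj : y j = 0 := (key0 j (Nat.le_of_lt (Finset.mem_range.mp hj)) hz).2 j le_rfl
        (Finset.mem_range.mp hj)
      simp [hd, ← hxj, hyj]
  have habel : ∑ j ∈ Finset.range m, c j * d j ≤ 0 := by
    have hparts := Finset.sum_range_by_parts c d m
    simp only [smul_eq_mul] at hparts
    have hDm : ∑ j ∈ Finset.range m, d j = 0 := by
      simp only [hd, Finset.sum_sub_distrib, heq, sub_self]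
    have hterm2 : ∀ i ∈ Finset.range (m - 1),
        0 ≤ (c (i + 1) - c i) * ∑ j ∈ Finset.range (i + 1), d j := by
      intro i hi
      have him : i + 1 < m := by have := Finset.mem_range.mp hi; omega
      rcases (hx0 (i + 1)).lt_or_eq with hxi | hxi
      · have hcle : c (i + 1) - c i ≤ 0 := by
          have : Real.log (x (i+1)) ≤ Real.log (x i) :=
            Real.log_le_log hxi (hxa i (i+1) (Nat.le_succ i))
          simp only [hc]; linarith
        have hDle : ∑ j ∈ Finset.range (i + 1), d j ≤ 0 := by
          have := hmaj (i + 1) (Nat.le_of_lt him)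
          simp only [hd, Finset.sum_sub_distrib]; linarith
        nlinarith
      · have hz : ∀ j, i + 1 ≤ j → x j = 0 := fun j hj =>
          le_antisymm ((hxa (i+1) j hj).trans hxi.symm.le) (hx0 j)
        have hD : ∑ j ∈ Finset.range (i + 1), d j = 0 := by
          have := (key0 (i+1) (Nat.le_of_lt him) hz).1
          simp only [hd, Finset.sum_sub_distrib, this, sub_self]
        rw [hD, mul_zero]
    rw [hDm, mul_zero] at hparts
    rw [hparts]
    simp only [zero_sub, neg_nonpos]
    exact Finset.sum_nonneg hterm2
  have := Finset.sum_le_sum hterm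
  rw [Finset.sum_sub_distrib] at this
  linarith


/-- the greatest lower bound a of two sorted distributions p, q, defined by
a_i = min(Σ_{j≤i} p_j, Σ_{j≤i} q_j) - Σ_{j<i} a_j, is a probability distribution that
majorizes every coupling M of p and q; consequently H(M) ≥ H(a). -/
theorem coupling_glb_majorizes (n : ℕ) (p q : Fin n → ℝ)
    (hp : (∀ i, 0 ≤ p i) ∧ ∑ i, p i = 1)
    (hq : (∀ i, 0 ≤ q i) ∧ ∑ i, q i = 1)
    (hpmono : Antitone p) (hqmono : Antitone q)
    (a : Fin n → ℝ)
    (ha : ∀ i : Fin n,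
      a i = min (∑ j ∈ Finset.Iic i, p j) (∑ j ∈ Finset.Iic i, q j)
              - ∑ j ∈ Finset.Iio i, a j) :
    ((∀ i, 0 ≤ a i) ∧ ∑ i, a i = 1) ∧
    ∀ M : Fin n × Fin n → ℝ, (∀ z, 0 ≤ M z) →
      (∀ i, ∑ j, M (i, j) = p i) → (∀ j, ∑ i, M (i, j) = q j) →
      ((∀ s : Finset (Fin n × Fin n),
          ∑ z ∈ s, M z ≤ ∑ j ∈ Finset.univ.filter (fun j : Fin n => (j : ℕ) < s.card), a j) ∧
        ent a ≤ ent M) := by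
  classical
  obtain ⟨hp0, hp1⟩ := hp
  obtain ⟨hq0, hq1⟩ := hq
  have hIio : ∀ i : Fin n, Finset.Iio i = preS n i.val := by
    intro i; ext j; simp only [Finset.mem_Iio, preS, mem_filter, mem_univ, true_and, Fin.lt_def]
  have hIic : ∀ i : Fin n, Finset.Iic i = preS n (i.val + 1) := by
    intro i; ext j; simp only [Finset.mem_Iic, preS, mem_filter, mem_univ, true_and, Fin.le_def]
    omega
  have SA : ∀ k, k ≤ n → ∑ j ∈ preS n k, a j
      = min (∑ j ∈ preS n k, p j) (∑ j ∈ preS n k, q j) := by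
    intro k hk
    match k, hk with
    | 0, _ =>
      have h0 : preS n 0 = (∅ : Finset (Fin n)) := by
        ext j; simp [preS]
      rw [h0]; simp
    | (k+1), hk =>
      set i : Fin n := ⟨k, hk⟩ with hi
      have h1 : preS n (k+1) = Finset.Iic i := (hIic i).symm
      rw [h1]
      rw [← Finset.Iio_insert, Finset.sum_insert (by simp), ha i, ← Finset.Iio_insert i]
      ring
  have hsubIic : ∀ i : Fin n, preS n i.val ⊆ Finset.Iic i := by
    intro i; rw [hIic i]; exact preS_mono n (Nat.le_succ _)
  have hminle : ∀ i : Fin n,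
      min (∑ j ∈ preS n i.val, p j) (∑ j ∈ preS n i.val, q j)
        ≤ min (∑ j ∈ Finset.Iic i, p j) (∑ j ∈ Finset.Iic i, q j) := by
    intro i
    exact le_min
      ((min_le_left _ _).trans
        (Finset.sum_le_sum_of_subset_of_nonneg (hsubIic i) fun j _ _ => hp0 j))
      ((min_le_right _ _).trans
        (Finset.sum_le_sum_of_subset_of_nonneg (hsubIic i) fun j _ _ => hq0 j))
  have ha0 : ∀ i : Fin n, 0 ≤ a i := by
    intro i
    rw [ha i, sub_nonneg, hIio i, SA i.val (le_of_lt i.isLt)]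
    exact hminle i
  have hsum : ∑ i, a i = 1 := by
    have h := SA n le_rfl
    rw [preS_univ] at h
    rw [h, hp1, hq1]; simp
  refine ⟨⟨ha0, hsum⟩, ?_⟩
  intro M hM0 hrow hcol
  have hMtot : ∑ z, M z = 1 := by
    rw [Fintype.sum_prod_type]
    calc ∑ i, ∑ j, M (i, j) = ∑ i, p i := Finset.sum_congr rfl fun i _ => hrow i
      _ = 1 := hp1
  have key : ∀ s : Finset (Fin n × Fin n),
      ∑ z ∈ s, M z ≤ ∑ j ∈ Finset.univ.filter (fun j : Fin n => (j : ℕ) < s.card), a j := by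
    intro s
    show ∑ z ∈ s, M z ≤ ∑ j ∈ preS n s.card, a j
    set k' := min s.card n with hk'
    have hps : preS n s.card = preS n k' := by
      ext j; simp only [preS, mem_filter, mem_univ, true_and, hk', lt_min_iff]
      exact ⟨fun h => ⟨h, j.isLt⟩, fun h => h.1⟩
    rw [hps, SA k' (min_le_right _ _)]
    set R := s.image Prod.fst with hR
    set C := s.image Prod.snd with hC
    have hrowb : ∑ z ∈ s, M z ≤ ∑ j ∈ preS n k', p j := by
      calc ∑ z ∈ s, M z ≤ ∑ z ∈ R ×ˢ Finset.univ, M z :=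
            Finset.sum_le_sum_of_subset_of_nonneg
              (fun z hz => Finset.mem_product.mpr
                ⟨Finset.mem_image_of_mem _ hz, Finset.mem_univ _⟩)
              (fun z _ _ => hM0 z)
        _ = ∑ i ∈ R, ∑ j, M (i, j) := by rw [Finset.sum_product]
        _ = ∑ i ∈ R, p i := Finset.sum_congr rfl fun i _ => hrow i
        _ ≤ ∑ j ∈ preS n R.card, p j := sum_le_sum_preS p hpmono R
        _ ≤ ∑ j ∈ preS n k', p j := by
            refine Finset.sum_le_sum_of_subset_of_nonneg (preS_mono n ?_) fun j _ _ => hp0 j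
            have h1 : R.card ≤ s.card := Finset.card_image_le
            have h2 : R.card ≤ n := by simpa using R.card_le_univ
            omega
    have hcolb : ∑ z ∈ s, M z ≤ ∑ j ∈ preS n k', q j := by
      calc ∑ z ∈ s, M z ≤ ∑ z ∈ Finset.univ ×ˢ C, M z :=
            Finset.sum_le_sum_of_subset_of_nonneg
              (fun z hz => Finset.mem_product.mpr
                ⟨Finset.mem_univ _, Finset.mem_image_of_mem _ hz⟩)
              (fun z _ _ => hM0 z)
        _ = ∑ j ∈ C, ∑ i, M (i, j) := by rw [Finset.sum_product_right]
        _ = ∑ j ∈ C, q j := Finset.sum_congr rfl fun j _ => hcol j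
        _ ≤ ∑ j ∈ preS n C.card, q j := sum_le_sum_preS q hqmono C
        _ ≤ ∑ j ∈ preS n k', q j := by
            refine Finset.sum_le_sum_of_subset_of_nonneg (preS_mono n ?_) fun j _ _ => hq0 j
            have h1 : C.card ≤ s.card := Finset.card_image_le
            have h2 : C.card ≤ n := by simpa using C.card_le_univ
            omega
    exact le_min hrowb hcolb
  refine ⟨key, ?_⟩
  rcases Nat.eq_zero_or_pos n with rfl | hn
  · exact absurd hp1 (by simp)
  set m := n * n with hm
  have hnm : n ≤ m := Nat.le_mul_of_pos_left n hn
  set e := (finProdFinEquiv : Fin n × Fin n ≃ Fin m) with he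
  set g : Fin m → ℝ := fun i => -(M (e.symm i)) with hg
  set σ := Tuple.sort g with hσ
  set xF : Fin m → ℝ := fun i => M (e.symm (σ i)) with hxF
  have hxFanti : ∀ i j : Fin m, i ≤ j → xF j ≤ xF i := by
    intro i j hij
    have h := Tuple.monotone_sort g hij
    simp only [Function.comp_apply, hg] at h
    simp only [hxF]
    linarith
  set x' : ℕ → ℝ := fun k => if h : k < m then xF ⟨k, h⟩ else 0 with hx'
  set y' : ℕ → ℝ := fun k => if h : k < n then a ⟨k, h⟩ else 0 with hy'
  have hx'0 : ∀ i, 0 ≤ x' i := by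
    intro i; simp only [hx']; split
    · exact hM0 _
    · exact le_rfl
  have hy'0 : ∀ i, 0 ≤ y' i := by
    intro i; simp only [hy']; split
    · exact ha0 _
    · exact le_rfl
  have hx'anti : ∀ i j, i ≤ j → x' j ≤ x' i := by
    intro i j hij
    by_cases hj : j < m
    · have hi : i < m := lt_of_le_of_lt hij hj
      simp only [hx', dif_pos hj, dif_pos hi]
      exact hxFanti ⟨i, hi⟩ ⟨j, hj⟩ hij
    · have := hx'0 i
      simp only [hx'] at this ⊢
      rw [dif_neg hj]
      exact this
  have hsum_y' : ∀ k, ∑ j ∈ Finset.range k, y' j = ∑ j ∈ preS n k, a j := by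
    intro k
    rw [sum_preS n k a y' (fun i => by simp [hy', i.isLt])]
    refine (Finset.sum_subset (Finset.range_subset_range.mpr (min_le_left k n)) ?_).symm
    intro j hj hj2
    simp only [Finset.mem_range] at hj hj2
    simp only [hy']
    rw [dif_neg (by omega)]
  have hsum_x' : ∀ k, k ≤ m → ∑ j ∈ Finset.range k, x' j = ∑ j ∈ preS m k, xF j := by
    intro k hk
    rw [sum_preS m k xF x' (fun i => by simp [hx', i.isLt]), Nat.min_eq_left hk]
  have hinj : Function.Injective (fun j : Fin m => e.symm (σ j)) :=
    fun u v huv => σ.injective (e.symm.injective huv)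
  have hmaj' : ∀ k, k ≤ m → ∑ j ∈ Finset.range k, x' j ≤ ∑ j ∈ Finset.range k, y' j := by
    intro k hk
    rw [hsum_x' k hk, hsum_y' k]
    have h1 : ∑ j ∈ preS m k, xF j
        = ∑ z ∈ (preS m k).image (fun j => e.symm (σ j)), M z := by
      rw [Finset.sum_image (fun u _ v _ h => hinj h)]
    have h2 : ((preS m k).image (fun j => e.symm (σ j))).card = k := by
      rw [Finset.card_image_of_injective _ hinj, preS_card, Nat.min_eq_left hk]
    have h3 := key ((preS m k).image (fun j => e.symm (σ j)))
    rw [h2] at h3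
    rw [h1]
    exact h3
  have hx'tot : ∑ j ∈ Finset.range m, x' j = 1 := by
    rw [hsum_x' m le_rfl, preS_univ]
    calc ∑ i : Fin m, xF i = ∑ i : Fin m, M (e.symm i) :=
          Equiv.sum_comp σ (fun i => M (e.symm i))
      _ = ∑ z, M z := Equiv.sum_comp e.symm M
      _ = 1 := hMtot
  have hy'tot : ∑ j ∈ Finset.range m, y' j = 1 := by
    rw [hsum_y' m]
    have hu : preS n m = Finset.univ := by
      ext j; simp only [preS, mem_filter, mem_univ, true_and, iff_true]
      exact lt_of_lt_of_le j.isLt hnm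
    rw [hu, hsum]
  have hHLP := hlp m x' y' hx'0 hy'0 hx'anti hmaj' (hx'tot.trans hy'tot.symm)
  have hxlog : ∑ j ∈ Finset.range m, x' j * Real.log (x' j)
      = ∑ z, M z * Real.log (M z) := by
    rw [← Fin.sum_univ_eq_sum_range (fun k => x' k * Real.log (x' k)) m]
    calc ∑ i : Fin m, x' i * Real.log (x' i)
        = ∑ i : Fin m, xF i * Real.log (xF i) :=
          Finset.sum_congr rfl fun i _ => by simp [hx', i.isLt]
      _ = ∑ i : Fin m, M (e.symm i) * Real.log (M (e.symm i)) :=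
          Equiv.sum_comp σ (fun i => M (e.symm i) * Real.log (M (e.symm i)))
      _ = ∑ z, M z * Real.log (M z) :=
          Equiv.sum_comp e.symm (fun z => M z * Real.log (M z))
  have hylog : ∑ j ∈ Finset.range m, y' j * Real.log (y' j)
      = ∑ i, a i * Real.log (a i) := by
    have hs : ∑ j ∈ Finset.range m, y' j * Real.log (y' j)
        = ∑ j ∈ Finset.range n, y' j * Real.log (y' j) := by
      refine (Finset.sum_subset (Finset.range_subset_range.mpr hnm) ?_).symm
      intro j hj hj2
      simp only [Finset.mem_range] at hj hj2
      simp only [hy']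
      rw [dif_neg (by omega)]
      simp
    rw [hs, ← Fin.sum_univ_eq_sum_range (fun k => y' k * Real.log (y' k)) n]
    exact Finset.sum_congr rfl fun i _ => by simp [hy', i.isLt]
  rw [hxlog, hylog] at hHLP
  have hlog2 : (0:ℝ) < Real.log 2 := Real.log_pos (by norm_num)
  have hentM : ent M = -((∑ z, M z * Real.log (M z)) / Real.log 2) := by
    rw [ent, Finset.sum_div]
    congr 1
    exact Finset.sum_congr rfl fun z _ => by rw [Real.logb, mul_div_assoc]
  have henta : ent a = -((∑ i, a i * Real.log (a i)) / Real.log 2) := by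
    rw [ent, Finset.sum_div]
    congr 1
    exact Finset.sum_congr rfl fun i _ => by rw [Real.logb, mul_div_assoc]
  rw [hentM, henta]
  apply neg_le_neg
  exact div_le_div_of_nonneg_right hHLP hlog2.le

end PaperPID
end
end
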